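/- arXiv:1211.3949 — 5 statements merged into one kernel-verified Lean document; each statement's English description precedes it below -/
import Mathlib

section
/- For every continuous nondecreasing surjection f : b^ω → b^ω, the family (f⁻¹(W_s))_{s ∈ b^{<ω}}, where W_s is the basic clopen set of sequences extending s, is a filtering on b^ω: each f⁻¹(W_s) is a nonempty clopen interval, f⁻¹(W_∅) = b^ω, the sets f⁻¹(W_{s⌢i}) for i < b partition f⁻¹(W_s), and the sequence of their lexicographic maxima is increasing in i. -/
noncomputable section
open Classical

/-- Lexicographic strict order on `ℕ → Fin b`. -/
def lexLT (b : ℕ) (x y : ℕ → Fin b) : Prop :=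
  ∃ n, (∀ m, m < n → x m = y m) ∧ x n < y n

/-- Lexicographic order `≤_lex` on `ℕ → Fin b`. -/
def lexLE (b : ℕ) (x y : ℕ → Fin b) : Prop := x = y ∨ lexLT b x y

def IsGreatestLex (b : ℕ) (S : Set (ℕ → Fin b)) (x : ℕ → Fin b) : Prop :=
  x ∈ S ∧ ∀ y ∈ S, lexLE b y x

def IsLeastLex (b : ℕ) (S : Set (ℕ → Fin b)) (x : ℕ → Fin b) : Prop :=
  x ∈ S ∧ ∀ y ∈ S, lexLE b x y

/-- `S` is an interval for the lexicographic order. -/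
def LexInterval (b : ℕ) (S : Set (ℕ → Fin b)) : Prop :=
  ∀ x ∈ S, ∀ y ∈ S, ∀ z, lexLE b x z → lexLE b z y → z ∈ S

/-- The basic clopen set of sequences extending the finite sequence `s`. -/
def W (b : ℕ) (s : List (Fin b)) : Set (ℕ → Fin b) :=
  {x | ∀ i, (hi : i < s.length) → x i = s.get ⟨i, hi⟩}

/-- Continuous nondecreasing surjections of `b^ω`, i.e. members of `C↑_sur(b^ω)`. -/
def CSur (b : ℕ) (f : (ℕ → Fin b) → (ℕ → Fin b)) : Prop :=
  Continuous f ∧ Function.Surjective f ∧ ∀ x y, lexLE b x y → lexLE b (f x) (f y)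

/-- A filtering on `b^ω`. -/
def Filtering (b : ℕ) (U : List (Fin b) → Set (ℕ → Fin b)) : Prop :=
  (∀ s, (U s).Nonempty ∧ IsClopen (U s) ∧ LexInterval b (U s)) ∧
  U [] = Set.univ ∧
  (∀ s, U s = ⋃ i : Fin b, U (s ++ [i])) ∧
  (∀ s, ∀ i j : Fin b, i ≠ j → Disjoint (U (s ++ [i])) (U (s ++ [j]))) ∧
  (∀ s, ∀ i j : Fin b, i < j → ∀ x y,
    IsGreatestLex b (U (s ++ [i])) x → IsGreatestLex b (U (s ++ [j])) y → lexLT b x y)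

/-- `A_b`: sequences eventually equal to `b-1` (the top of `Fin b`), except the constant
top sequence (the lexicographic maximum of `b^ω`). -/
def AbSet (b : ℕ) : Set (ℕ → Fin b) :=
  {x | (∃ N, ∀ n, N ≤ n → ∀ j : Fin b, j ≤ x n) ∧ ¬ ∀ n, ∀ j : Fin b, j ≤ x n}

/-- `Y` is order isomorphic to `ℚ` with respect to the lexicographic order. -/
def OrderIsoQ (b : ℕ) (Y : Set (ℕ → Fin b)) : Prop :=
  ∃ e : ℚ ≃ Y, ∀ p q : ℚ, p ≤ q ↔ lexLE b (e p).1 (e q).1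

/-- `Y_f = {max f⁻¹(W_s) : s ∈ b^{<ω}} \ {max b^ω}`. -/
def Yset (b : ℕ) (f : (ℕ → Fin b) → (ℕ → Fin b)) : Set (ℕ → Fin b) :=
  {x | (∃ s : List (Fin b), IsGreatestLex b (f ⁻¹' W b s) x) ∧ ¬ ∀ n, ∀ j : Fin b, j ≤ x n}

/-- The metric `ρ_b` on `b^ω`. -/
def rhoB (b : ℕ) (x y : ℕ → Fin b) : ℝ :=
  if h : x = y then 0 else (2 : ℝ) ^ (-(Nat.find (Function.ne_iff.mp h) : ℤ))

/-- The sup-metric `ρ_∞` on `C↑_sur(b^ω)`. -/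
def rhoInf (b : ℕ) (f g : (ℕ → Fin b) → (ℕ → Fin b)) : ℝ :=
  ⨆ x, rhoB b (f x) (g x)

/-- `⌊log₂(1/ε)⌋ + 1`. -/
def kOf (ε : ℝ) : ℕ := ⌊Real.logb 2 (1 / ε)⌋₊ + 1

/-- The `l`-th odd tangent number `t_l = tan^{(2l-1)}(0)`. -/
def oddTangent (l : ℕ) : ℝ := iteratedDeriv (2 * l - 1) Real.tan 0

/-- The lexicographically increasing enumeration of `b^k`: `sEnum b k hb i` is the
`i`-th element of `b^k` in lexicographic order (base-`b` digits, most significant first). -/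
def sEnum (b k : ℕ) (hb : 0 < b) (i : ℕ) : List (Fin b) :=
  List.ofFn fun j : Fin k => (⟨i / b ^ (k - 1 - (j : ℕ)) % b, Nat.mod_lt _ hb⟩ : Fin b)

end

lemma lexLT_asymm {b : ℕ} {x y : ℕ → Fin b} (h : lexLT b x y) (h' : lexLT b y x) : False := by
  obtain ⟨n, hn, hxn⟩ := h
  obtain ⟨m, hm, hym⟩ := h'
  rcases lt_trichotomy n m with h | rfl | h
  · exact hxn.ne' (hm n h)
  · exact absurd hym (not_lt.2 hxn.le)
  · exact hym.ne' (hn m h)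

lemma lexLT_total {b : ℕ} {x y : ℕ → Fin b} (h : x ≠ y) : lexLT b x y ∨ lexLT b y x := by
  have hne := Function.ne_iff.mp h
  have h1 : x (Nat.find hne) ≠ y (Nat.find hne) := Nat.find_spec hne
  have h2 : ∀ m < Nat.find hne, x m = y m := fun m hm => not_not.mp (Nat.find_min hne hm)
  rcases lt_or_gt_of_ne h1 with h | h
  · exact Or.inl ⟨_, h2, h⟩
  · exact Or.inr ⟨_, fun m hm => (h2 m hm).symm, h⟩

lemma W_lexInterval (b : ℕ) (s : List (Fin b)) : LexInterval b (W b s) := by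
  intro u hu v hv w huw hwv
  rcases huw with rfl | ⟨n, hn, hun⟩
  · exact hu
  rcases hwv with rfl | ⟨m, hm, hwm⟩
  · exact hv
  by_cases h1 : s.length ≤ n
  · intro i hi
    rw [← hn i (lt_of_lt_of_le hi h1)]
    exact hu i hi
  by_cases h2 : s.length ≤ m
  · intro i hi
    rw [hm i (lt_of_lt_of_le hi h2)]
    exact hv i hi
  exfalso
  push_neg at h1 h2
  have hus := hu n h1
  have hvs := hv m h2
  rcases lt_trichotomy n m with h | rfl | h
  · have : w n = v n := hm n h
    have : u n = w n := by rw [this, hv n h1, ← hus]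
    exact absurd this hun.ne
  · have : u n = v n := by rw [hus, ← hvs]
    exact absurd (hun.trans hwm) (this ▸ lt_irrefl _)
  · have hwu : w m = u m := (hn m h).symm
    have : w m = v m := by rw [hwu, hu m h2, ← hvs]
    exact absurd this hwm.ne

lemma W_isClopen (b : ℕ) (s : List (Fin b)) : IsClopen (W b s) := by
  have hW : W b s = ⋂ i : Fin s.length, (fun x : ℕ → Fin b => x i) ⁻¹' {s.get i} := by
    ext x
    simp only [W, Set.mem_setOf_eq, Set.mem_iInter, Set.mem_preimage, Set.mem_singleton_iff]
    constructor
    · intro h i; exact h i i.2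
    · intro h i hi; exact h ⟨i, hi⟩
  rw [hW]
  exact isClopen_iInter_of_finite fun i => (isClopen_discrete _).preimage (continuous_apply _)

lemma W_nonempty {b : ℕ} (hb : 0 < b) (s : List (Fin b)) : (W b s).Nonempty := by
  refine ⟨fun i => if hi : i < s.length then s.get ⟨i, hi⟩ else ⟨0, hb⟩, ?_⟩
  intro i hi
  simp [hi]

/-- for every `f ∈ C↑_sur(b^ω)`, the family `(f⁻¹(W_s))_{s ∈ b^{<ω}}` is a
filtering on `b^ω`. -/
theorem preimage_family_is_filtering (b : ℕ) (hb : 2 ≤ b)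
    (f : (ℕ → Fin b) → (ℕ → Fin b)) (hf : CSur b f) :
    Filtering b (fun s => f ⁻¹' W b s) := by
  obtain ⟨hcont, hsurj, hmono⟩ := hf
  have hb0 : 0 < b := by omega
  refine ⟨?_, ?_, ?_, ?_, ?_⟩
  · intro s
    refine ⟨?_, (W_isClopen b s).preimage hcont, ?_⟩
    · obtain ⟨w, hw⟩ := W_nonempty hb0 s
      obtain ⟨x, hx⟩ := hsurj w
      exact ⟨x, by simp [hx, hw]⟩
    · intro x hx y hy z hxz hzy
      exact W_lexInterval b s (f x) hx (f y) hy (f z) (hmono _ _ hxz) (hmono _ _ hzy)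
  · ext x; simp [W]
  · intro s
    have : W b s = ⋃ i : Fin b, W b (s ++ [i]) := by
      ext x
      simp only [Set.mem_iUnion]
      constructor
      · intro hx
        refine ⟨x s.length, fun i hi => ?_⟩
        simp only [List.length_append, List.length_singleton] at hi
        rcases lt_or_eq_of_le (Nat.lt_succ_iff.mp hi) with h | h
        · rw [List.get_eq_getElem, List.getElem_append_left h]
          exact hx i h
        · subst h
          simp [List.get_eq_getElem, List.getElem_concat_length]
      · rintro ⟨i, hx⟩ j hj
        have h := hx j (by simp; omega)
        rw [List.get_eq_getElem, List.getElem_append_left hj] at h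
        rw [List.get_eq_getElem]
        exact h
    simp only [this, Set.preimage_iUnion]
  · intro s i j hij
    rw [Set.disjoint_iff]
    rintro x ⟨hxi, hxj⟩
    have h1 := hxi s.length (by simp)
    have h2 := hxj s.length (by simp)
    simp only [List.get_eq_getElem, List.getElem_concat_length] at h1 h2
    exact hij (h1 ▸ h2 ▸ rfl)
  · intro s i j hij x y hx hy
    have hfx : f x ∈ W b (s ++ [i]) := hx.1
    have hfy : f y ∈ W b (s ++ [j]) := hy.1
    have hlt : lexLT b (f x) (f y) := by
      refine ⟨s.length, fun m hm => ?_, ?_⟩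
      · have h1 := hfx m (by simp; omega)
        have h2 := hfy m (by simp; omega)
        rw [List.get_eq_getElem, List.getElem_append_left hm] at h1 h2
        rw [h1, h2]
      · have h1 := hfx s.length (by simp)
        have h2 := hfy s.length (by simp)
        simp only [List.get_eq_getElem, List.getElem_concat_length] at h1 h2
        rw [h1, h2]; exact hij
    have hne : x ≠ y := by
      rintro rfl
      exact lexLT_asymm hlt hlt
    rcases lexLT_total hne with h | h
    · exact h
    · exfalso
      rcases hmono y x (Or.inr h) with heq | hlt'
      · exact (heq ▸ lexLT_asymm hlt) (heq ▸ hlt)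
      · exact lexLT_asymm hlt hlt'
end

section
/- Every filtering on b^ω arises from a unique continuous nondecreasing surjection: the map D sending f ∈ C↑_sur(b^ω) to the filtering (f⁻¹(W_s))_{s ∈ b^{<ω}} is a bijection onto the set F_b of all filterings on b^ω. -/
section Aux
variable {b : ℕ}

lemma lexLT_iff {x y : ℕ → Fin b} : lexLT b x y ↔ toLex x < toLex y := Iff.rfl

lemma lexLE_iff {x y : ℕ → Fin b} : lexLE b x y ↔ toLex x ≤ toLex y := by
  rw [le_iff_lt_or_eq]
  constructor
  · rintro (rfl | h)
    · exact Or.inr rfl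
    · exact Or.inl (lexLT_iff.1 h)
  · rintro (h | h)
    · exact Or.inr (lexLT_iff.2 h)
    · exact Or.inl (by exact_mod_cast h)

lemma W_nil : W b ([] : List (Fin b)) = Set.univ := by
  ext x; simp only [W, Set.mem_setOf_eq, Set.mem_univ, iff_true]
  intro i hi; exact absurd hi (by simp)

lemma mem_W_iff {s : List (Fin b)} {x : ℕ → Fin b} :
    x ∈ W b s ↔ ∀ i, (hi : i < s.length) → x i = s[i] := Iff.rfl

lemma mem_W_append {s : List (Fin b)} {v : Fin b} {x : ℕ → Fin b} :
    x ∈ W b (s ++ [v]) ↔ x ∈ W b s ∧ x s.length = v := by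
  constructor
  · intro h
    refine ⟨fun i hi => ?_, ?_⟩
    · have := h i (by simp only [List.length_append, List.length_singleton]; omega)
      rwa [List.get_eq_getElem, List.getElem_append_left hi] at this
    · have := h s.length (by simp)
      rw [List.get_eq_getElem] at this
      simp only [Fin.val_mk] at this
      rwa [List.getElem_concat_length] at this
      rfl
  · rintro ⟨h1, h2⟩
    intro i hi
    rw [List.get_eq_getElem]
    rcases lt_or_ge i s.length with h | h
    · rw [List.getElem_append_left h]; exact h1 i h
    · have : i = s.length := by
        simp only [List.length_append, List.length_singleton] at hi; omega
      subst this
      simp only [Fin.val_mk]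
      rw [List.getElem_concat_length]
      exact h2
      rfl


lemma exists_isGreatestLex {S : Set (ℕ → Fin b)} (hne : S.Nonempty) (hcl : IsClosed S) :
    ∃ m : ℕ → Fin b, m ∈ S ∧ ∀ y ∈ S, lexLE b y m := by
  obtain ⟨x0, hx0⟩ := hne
  -- the greedy step: a maximal next digit
  have step : ∀ l : List (Fin b), ∃ v : Fin b, (S ∩ W b l).Nonempty →
      ((S ∩ W b (l ++ [v])).Nonempty ∧ ∀ w, (S ∩ W b (l ++ [w])).Nonempty → w ≤ v) := by
    intro l
    by_cases h : (S ∩ W b l).Nonempty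
    · obtain ⟨x, hxS, hxW⟩ := h
      set T : Set (Fin b) := {v | (S ∩ W b (l ++ [v])).Nonempty} with hT
      have hxT : x l.length ∈ T := ⟨x, hxS, mem_W_append.2 ⟨hxW, rfl⟩⟩
      haveI : Nonempty T := ⟨⟨_, hxT⟩⟩
      obtain ⟨v0, hv0⟩ := Finite.exists_max (fun t : T => (t : Fin b))
      exact ⟨v0, fun _ => ⟨v0.2, fun w hw => hv0 ⟨w, hw⟩⟩⟩
    · exact ⟨x0 0, fun h' => absurd h' h⟩
  choose dig digspec using step
  let P : ℕ → List (Fin b) := fun n => Nat.rec [] (fun _ l => l ++ [dig l]) n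
  have hPs : ∀ n, P (n + 1) = P n ++ [dig (P n)] := fun _ => rfl
  have hP0 : P 0 = [] := rfl
  set M : ℕ → Fin b := fun n => dig (P n) with hM
  have hPlen : ∀ n, (P n).length = n := by
    intro n; induction n with
    | zero => rfl
    | succ n ih => rw [hPs]; simp [ih]
  have hPmem : ∀ n, (S ∩ W b (P n)).Nonempty := by
    intro n; induction n with
    | zero => rw [hP0, W_nil]; exact ⟨x0, hx0, Set.mem_univ _⟩
    | succ n ih => rw [hPs]; exact (digspec (P n) ih).1
  have hPW : ∀ n (x : ℕ → Fin b), x ∈ W b (P n) ↔ ∀ k, k < n → x k = M k := by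
    intro n; induction n with
    | zero =>
      intro x; rw [hP0, W_nil]
      simp only [Set.mem_univ, true_iff]
      intro k hk; omega
    | succ n ih =>
      intro x
      rw [hPs, mem_W_append, ih, hPlen]
      constructor
      · rintro ⟨h1, h2⟩ k hk
        rcases Nat.lt_succ_iff_lt_or_eq.1 hk with h | rfl
        · exact h1 k h
        · exact h2
      · intro h
        exact ⟨fun k hk => h k (hk.trans (Nat.lt_succ_self n)), h n (Nat.lt_succ_self n)⟩
  have hMS : M ∈ S := by
    have hx : ∀ n : ℕ, (hPmem n).some ∈ S ∧ (hPmem n).some ∈ W b (P n) := fun n =>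
      ⟨((hPmem n).some_mem).1, ((hPmem n).some_mem).2⟩
    refine hcl.mem_of_tendsto (f := fun n : ℕ => (hPmem n).some) (b := Filter.atTop) ?_
      (Filter.Eventually.of_forall fun n => (hx n).1)
    rw [tendsto_pi_nhds]
    intro k
    apply tendsto_atTop_of_eventually_const (i₀ := k + 1)
    intro n hn
    exact ((hPW n _).1 (hx n).2) k (by omega)
  refine ⟨M, hMS, fun y hy => ?_⟩
  by_cases hyM : y = M
  · exact Or.inl hyM
  · have hne' : ∃ n, y n ≠ M n := Function.ne_iff.1 hyM
    set n := Nat.find hne' with hn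
    have hag : ∀ m, m < n → y m = M m := fun m hm => by
      have := Nat.find_min hne' hm; simpa using this
    have hyW : y ∈ W b (P n) := (hPW n y).2 hag
    have hle : y n ≤ M n := by
      refine (digspec (P n) (hPmem n)).2 (y n) ⟨y, hy, mem_W_append.2 ⟨hyW, ?_⟩⟩
      rw [hPlen]
    exact Or.inr ⟨n, hag, lt_of_le_of_ne hle (Nat.find_spec hne')⟩


end Aux

open Classical in
/-- Greedy digit: some `i` with `x ∈ U (l ++ [i])`, if it exists. -/
noncomputable def FDig (b : ℕ) (hb : 0 < b) (U : List (Fin b) → Set (ℕ → Fin b))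
    (x : ℕ → Fin b) (l : List (Fin b)) : Fin b :=
  if h : ∃ i : Fin b, x ∈ U (l ++ [i]) then h.choose else ⟨0, hb⟩

/-- The branch of `x` through the filtering `U`. -/
noncomputable def FPre (b : ℕ) (hb : 0 < b) (U : List (Fin b) → Set (ℕ → Fin b))
    (x : ℕ → Fin b) : ℕ → List (Fin b)
  | 0 => []
  | n + 1 => FPre b hb U x n ++ [FDig b hb U x (FPre b hb U x n)]

/-- The function associated to a filtering. -/
noncomputable def Ffun (b : ℕ) (hb : 0 < b) (U : List (Fin b) → Set (ℕ → Fin b))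
    (x : ℕ → Fin b) : ℕ → Fin b :=
  fun n => FDig b hb U x (FPre b hb U x n)

section Filt
variable {b : ℕ} (hb : 0 < b) {U : List (Fin b) → Set (ℕ → Fin b)} (hU : Filtering b U)
include hU

lemma U_snoc_subset (s : List (Fin b)) (i : Fin b) : U (s ++ [i]) ⊆ U s := by
  conv_rhs => rw [hU.2.2.1 s]
  exact Set.subset_iUnion (fun j : Fin b => U (s ++ [j])) i

omit hU in
lemma FPre_succ (x : ℕ → Fin b) (n : ℕ) :
    FPre b hb U x (n + 1) = FPre b hb U x n ++ [Ffun b hb U x n] := rfl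

lemma mem_FPre (x : ℕ → Fin b) : ∀ n, x ∈ U (FPre b hb U x n) := by
  intro n; induction n with
  | zero => show x ∈ U []; rw [hU.2.1]; trivial
  | succ n ih =>
    have hex : ∃ i : Fin b, x ∈ U (FPre b hb U x n ++ [i]) := by
      rw [hU.2.2.1] at ih; exact Set.mem_iUnion.1 ih
    rw [FPre_succ]
    show x ∈ U (_ ++ [FDig b hb U x (FPre b hb U x n)])
    rw [FDig, dif_pos hex]
    exact hex.choose_spec

lemma FPre_eq_of_mem (x : ℕ → Fin b) : ∀ l : List (Fin b), x ∈ U l →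
    FPre b hb U x l.length = l := by
  intro l
  induction l using List.reverseRecOn with
  | nil => intro _; rfl
  | append_singleton t i ih =>
    intro h
    have ht : FPre b hb U x t.length = t := ih (U_snoc_subset hU t i h)
    have hmem : x ∈ U (t ++ [Ffun b hb U x t.length]) := by
      have := mem_FPre hb hU x (t.length + 1)
      rwa [FPre_succ, ht] at this
    have hdig : Ffun b hb U x t.length = i := by
      by_contra hne
      exact Set.disjoint_left.1 (hU.2.2.2.1 t _ i hne) hmem h
    rw [List.length_append, List.length_singleton, FPre_succ, ht, hdig]

omit hU in
lemma FPre_eq_ofFn (x : ℕ → Fin b) (n : ℕ) :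
    FPre b hb U x n = List.ofFn (fun k : Fin n => Ffun b hb U x k) := by
  induction n with
  | zero => rfl
  | succ n ih =>
    rw [FPre_succ, ih, List.ofFn_succ', List.concat_eq_append]
    simp

lemma snoc_decomp (x : ℕ → Fin b) (l : List (Fin b)) (i : Fin b) (h : x ∈ U (l ++ [i])) :
    FPre b hb U x l.length = l ∧ Ffun b hb U x l.length = i := by
  have h2 := FPre_eq_of_mem hb hU x (l ++ [i]) h
  rw [List.length_append, List.length_singleton, FPre_succ] at h2
  have h1 : FPre b hb U x l.length = l := FPre_eq_of_mem hb hU x l (U_snoc_subset hU l i h)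
  rw [h1] at h2
  refine ⟨h1, ?_⟩
  have := List.append_cancel_left h2
  simpa using this

lemma mem_U_iff (x : ℕ → Fin b) (s : List (Fin b)) :
    x ∈ U s ↔ Ffun b hb U x ∈ W b s := by
  constructor
  · intro h
    have hs : s = List.ofFn (fun k : Fin s.length => Ffun b hb U x k) := by
      conv_lhs => rw [← FPre_eq_of_mem hb hU x s h, FPre_eq_ofFn]
    intro i hi
    rw [List.get_eq_getElem, List.getElem_of_eq hs, List.getElem_ofFn]
  · intro h
    have hs : s = List.ofFn (fun k : Fin s.length => Ffun b hb U x k) := by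
      apply List.ext_get (by simp)
      intro i h1 h2
      have := h i h1
      rw [List.get_eq_getElem] at this
      simp [← this]
    have := mem_FPre hb hU x s.length
    rwa [FPre_eq_ofFn, ← hs] at this


lemma preim_eq (n : ℕ) (i : Fin b) :
    {x : ℕ → Fin b | Ffun b hb U x n = i} = ⋃ g : Fin n → Fin b, U (List.ofFn g ++ [i]) := by
  ext x
  simp only [Set.mem_setOf_eq, Set.mem_iUnion]
  constructor
  · intro h
    refine ⟨fun k => Ffun b hb U x k, ?_⟩
    have := mem_FPre hb hU x (n + 1)
    rwa [FPre_succ, FPre_eq_ofFn, h] at this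
  · rintro ⟨g, hg⟩
    have := (snoc_decomp hb hU x (List.ofFn g) i hg).2
    rwa [List.length_ofFn] at this

lemma f_continuous : Continuous (fun x => Ffun b hb U x) := by
  apply continuous_pi
  intro n
  rw [continuous_discrete_rng]
  intro i
  have heq : (fun x => Ffun b hb U x n) ⁻¹' {i} = ⋃ g : Fin n → Fin b, U (List.ofFn g ++ [i]) := by
    rw [← preim_eq hb hU n i]
    rfl
  rw [heq]
  exact isOpen_iUnion fun g => ((hU.1 _).2.1).isOpen

lemma f_surjective : Function.Surjective (fun x => Ffun b hb U x) := by
  intro y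
  set t : ℕ → Set (ℕ → Fin b) := fun n => U (List.ofFn fun k : Fin n => y k) with ht
  have hofn : ∀ n : ℕ,
      (List.ofFn fun k : Fin (n + 1) => y k) = (List.ofFn fun k : Fin n => y k) ++ [y n] := by
    intro n; rw [List.ofFn_succ', List.concat_eq_append]; simp
  have hsub : ∀ n, t (n + 1) ⊆ t n := by
    intro n
    show U _ ⊆ U _
    rw [hofn n]
    exact U_snoc_subset hU _ _
  have hnonempty : ∀ n, (t n).Nonempty := fun n => (hU.1 _).1
  have hclosed : ∀ n, IsClosed (t n) := fun n => ((hU.1 _).2.1).isClosed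
  obtain ⟨x, hx⟩ := IsCompact.nonempty_iInter_of_sequence_nonempty_isCompact_isClosed t hsub
    hnonempty (hclosed 0).isCompact hclosed
  refine ⟨x, funext fun n => ?_⟩
  have hmem : x ∈ U ((List.ofFn fun k : Fin n => y k) ++ [y n]) := by
    have := Set.mem_iInter.1 hx (n + 1)
    rwa [show t (n+1) = U (List.ofFn fun k : Fin (n+1) => y k) from rfl, hofn n] at this
  have := (snoc_decomp hb hU x _ (y n) hmem).2
  rwa [List.length_ofFn] at this

lemma f_mono (x y : ℕ → Fin b) (h : lexLE b x y) :
    lexLE b (Ffun b hb U x) (Ffun b hb U y) := by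
  by_cases hfe : Ffun b hb U x = Ffun b hb U y
  · exact Or.inl hfe
  have hne : ∃ n, Ffun b hb U x n ≠ Ffun b hb U y n := Function.ne_iff.1 hfe
  set d := Nat.find hne with hd
  have hag : ∀ m, m < d → Ffun b hb U x m = Ffun b hb U y m := fun m hm => by
    have := Nat.find_min hne hm; simpa using this
  set s : List (Fin b) := List.ofFn fun k : Fin d => Ffun b hb U x k with hsdef
  have hsy : s = List.ofFn fun k : Fin d => Ffun b hb U y k := by
    rw [hsdef]
    apply List.ext_get (by simp)
    intro i h1 h2
    simp only [List.get_eq_getElem, List.getElem_ofFn]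
    exact hag i (by simpa using h1)
  have hx : x ∈ U (s ++ [Ffun b hb U x d]) := by
    have := mem_FPre hb hU x (d + 1)
    rwa [FPre_succ, FPre_eq_ofFn] at this
  have hy : y ∈ U (s ++ [Ffun b hb U y d]) := by
    have := mem_FPre hb hU y (d + 1)
    rw [FPre_succ, FPre_eq_ofFn] at this
    rwa [hsy]
  suffices hlt : Ffun b hb U x d < Ffun b hb U y d by
    exact Or.inr ⟨d, hag, hlt⟩
  by_contra hnot
  have hji : Ffun b hb U y d < Ffun b hb U x d :=
    lt_of_le_of_ne (not_lt.1 hnot) (Ne.symm (Nat.find_spec hne))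
  obtain ⟨Mi, hMiS, hMi⟩ := exists_isGreatestLex (S := U (s ++ [Ffun b hb U x d]))
    (hU.1 _).1 ((hU.1 _).2.1).isClosed
  obtain ⟨Mj, hMjS, hMj⟩ := exists_isGreatestLex (S := U (s ++ [Ffun b hb U y d]))
    (hU.1 _).1 ((hU.1 _).2.1).isClosed
  have h5 : lexLT b Mj Mi :=
    hU.2.2.2.2 s _ _ hji Mj Mi ⟨hMjS, hMj⟩ ⟨hMiS, hMi⟩
  have hyMj : lexLE b y Mj := hMj y hy
  have hyMi : lexLE b y Mi :=
    lexLE_iff.2 (le_trans (lexLE_iff.1 hyMj) (le_of_lt (lexLT_iff.1 h5)))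
  have hymem : y ∈ U (s ++ [Ffun b hb U x d]) := (hU.1 _).2.2 x hx Mi hMiS y h hyMi
  exact Set.disjoint_left.1 (hU.2.2.2.1 s _ _ (Nat.find_spec hne)) hymem hy

end Filt



/-- the map `D : f ↦ (f⁻¹(W_s))_s` is a bijection from `C↑_sur(b^ω)` onto
the set of filterings on `b^ω`. -/
theorem D_bijective (b : ℕ) (hb : 2 ≤ b) :
    (∀ f g, CSur b f → CSur b g →
      (∀ s : List (Fin b), f ⁻¹' W b s = g ⁻¹' W b s) → f = g) ∧
    (∀ U : List (Fin b) → Set (ℕ → Fin b), Filtering b U →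
      ∃ f, CSur b f ∧ ∀ s, f ⁻¹' W b s = U s) := by
  constructor
  · intro f g _ _ hpre
    funext x n
    set s : List (Fin b) := List.ofFn fun k : Fin (n + 1) => f x k with hs
    have hfx : x ∈ f ⁻¹' W b s := by
      intro i hi
      rw [List.get_eq_getElem]
      simp only [hs, List.getElem_ofFn]
    have hgx : x ∈ g ⁻¹' W b s := (hpre s) ▸ hfx
    have h1 := hgx n (by simp [hs])
    rw [List.get_eq_getElem] at h1
    simp only [hs, List.getElem_ofFn] at h1
    rw [h1]
  · intro U hU
    have hb0 : 0 < b := by omega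
    refine ⟨fun x => Ffun b hb0 U x,
      ⟨f_continuous hb0 hU, f_surjective hb0 hU, fun x y h => f_mono hb0 hU x y h⟩,
      fun s => ?_⟩
    ext x
    simp only [Set.mem_preimage]
    exact (mem_U_iff hb0 hU x s).symm
end

section
/- For every positive integer k and every ≤_lex-increasing tuple x = (x_0, ..., x_{l_k - 1}) of elements of A_b, where l_k = b^k - 1, there exists f ∈ C↑_sur(b^ω) such that max f⁻¹(W_{s^k_i}) = x_i for all i < l_k, where (s^k_i)_{i=0}^{l_k} is the lexicographically increasing enumeration of b^k. -/
/-!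
Extend the given points by `x_l := b-1 b-1 ⋯`, the top of `b^ω`, and choose `N` such that every
`x_c` is constantly `b-1` from `N` on. The points cut `b^ω` into the intervals `(x_{c-1}, x_c]`;
the interval of `y` depends only on `y↾N`, and its top part is the cylinder `W_{x_c↾N}`. Send the
`c`-th interval into `W_{s^k_c}`: its top cylinder by `y ↦ s^k_c ⌢ (y_{n+N})_n`, everything else in
it to the least point of `W_{s^k_c}`. This map is continuous because each output coordinate depends
on finitely many input coordinates, monotone because `c ↦ s^k_c` is, onto because every point of
`b^ω` lies in some `W_{s^k_c}`, and `x_c` is the largest point of the `c`-th interval.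
-/

open Set

theorem lexLE_iff_toLex_le {b : ℕ} {x y : ℕ → Fin b} : lexLE b x y ↔ toLex x ≤ toLex y := by
  rw [le_iff_eq_or_lt]
  exact Iff.rfl

section LexTail
variable {α : Type*} [LinearOrder α] {N : ℕ} {y z w : ℕ → α}

theorem toLex_lt_toLex_iff_tail (h : EqOn y z (Iio N)) :
    toLex y < toLex z ↔ toLex (fun n => y (n + N)) < toLex (fun n => z (n + N)) := by
  constructor
  · rintro ⟨i, hi, hlt⟩
    have hNi : N ≤ i := not_lt.1 fun hiN => hlt.ne (h hiN)
    refine ⟨i - N, fun j hj => hi _ (by omega), ?_⟩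
    show y (i - N + N) < z (i - N + N)
    rwa [Nat.sub_add_cancel hNi]
  · rintro ⟨i, hi, hlt⟩
    refine ⟨i + N, fun j hj => ?_, hlt⟩
    rcases lt_or_ge j N with hjN | hjN
    · exact h hjN
    · simpa [Nat.sub_add_cancel hjN] using hi (j - N) (by omega)

theorem toLex_le_toLex_iff_tail (h : EqOn y z (Iio N)) :
    toLex y ≤ toLex z ↔ toLex (fun n => y (n + N)) ≤ toLex (fun n => z (n + N)) := by
  simp only [← not_lt]
  exact (toLex_lt_toLex_iff_tail h.symm).not

theorem eqOn_Iio_of_toLex_le_of_toLex_le (hyz : toLex y ≤ toLex z) (hzw : toLex z ≤ toLex w)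
    (hyw : EqOn y w (Iio N)) : EqOn z w (Iio N) := by
  intro n
  induction n using Nat.strong_induction_on with
  | _ n ih =>
    intro hn
    have hzw' : ∀ j < n, z j = w j := fun j hj => ih j hj (lt_trans hj hn)
    refine le_antisymm (Pi.apply_le_of_toLex hzw hzw') ?_
    rw [← hyw hn]
    exact Pi.apply_le_of_toLex hyz fun j hj => (hyw (lt_trans hj hn)).trans (hzw' j hj).symm

theorem toLex_le_of_eqOn_Iio [OrderTop α] (hw : ∀ n, N ≤ n → w n = ⊤) (h : EqOn y z (Iio N))
    (hyw : toLex y ≤ toLex w) : toLex z ≤ toLex w := by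
  refine not_lt.1 fun ⟨i, hi, hlt⟩ => ?_
  have hiN : i < N := not_le.1 fun hNi => (hlt.trans_le le_top).ne (hw i hNi)
  have hwy : w i < y i := by rw [h hiN]; exact hlt
  exact hyw.not_gt ⟨i, fun j hj => (hi j hj).trans (h (hj.trans hiN)).symm, hwy⟩

end LexTail

section Prepend
variable {α : Type*}

def prepend (s : List α) (y : ℕ → α) : ℕ → α :=
  fun n => if h : n < s.length then s[n] else y (n - s.length)

theorem prepend_add_length (s : List α) (y : ℕ → α) (n : ℕ) :
    prepend s y (n + s.length) = y n := by
  simp [prepend]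

theorem prepend_of_lt (s : List α) (y : ℕ → α) {n : ℕ} (h : n < s.length) :
    prepend s y n = s[n] := dif_pos h

theorem prepend_le_prepend [LinearOrder α] (s : List α) {y z : ℕ → α} (h : toLex y ≤ toLex z) :
    toLex (prepend s y) ≤ toLex (prepend s z) := by
  have hs : EqOn (prepend s y) (prepend s z) (Iio s.length) := fun n hn => by
    rw [prepend_of_lt _ _ hn, prepend_of_lt _ _ hn]
  simpa [toLex_le_toLex_iff_tail hs, prepend_add_length] using h

theorem prepend_lt_prepend [LinearOrder α] {s t : List α} (hst : s < t)
    (hlen : s.length = t.length) (y z : ℕ → α) : toLex (prepend s y) < toLex (prepend t z) := by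
  obtain ⟨-, hlt⟩ | ⟨i, hs, ht, hi, hlt⟩ := List.lt_iff_exists.1 hst
  · exact absurd hlen hlt.ne
  refine ⟨i, fun j hj => ?_, ?_⟩
  · show prepend s y j = prepend t z j
    rw [prepend_of_lt _ _ (hj.trans hs), prepend_of_lt _ _ (hj.trans ht), hi j hj]
  · show prepend s y i < prepend t z i
    rwa [prepend_of_lt _ _ hs, prepend_of_lt _ _ ht]

end Prepend

section Cylinder
variable {b : ℕ}

theorem prepend_mem_W (s : List (Fin b)) (y : ℕ → Fin b) : prepend s y ∈ W b s :=
  fun _ hn => prepend_of_lt s y hn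

theorem prepend_mem_W_iff {s t : List (Fin b)} (hlen : s.length = t.length) (y : ℕ → Fin b) :
    prepend s y ∈ W b t ↔ s = t := by
  refine ⟨fun h => List.ext_getElem hlen fun n hs ht => ?_, fun h => h ▸ prepend_mem_W s y⟩
  rw [← prepend_of_lt s y hs, h n ht, List.get_eq_getElem]

theorem prepend_tail_of_mem_W {s : List (Fin b)} {z : ℕ → Fin b} (hz : z ∈ W b s) :
    prepend s (fun n => z (n + s.length)) = z := by
  funext n
  rcases lt_or_ge n s.length with hn | hn
  · rw [prepend_of_lt _ _ hn, hz n hn, List.get_eq_getElem]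
  · simp [prepend, not_lt.2 hn, Nat.sub_add_cancel hn]

end Cylinder

theorem isLocallyConstant_of_eqOn_Iio {β γ : Type*} [TopologicalSpace β] [DiscreteTopology β]
    {g : (ℕ → β) → γ} (M : ℕ) (hg : ∀ y z, EqOn y z (Iio M) → g y = g z) :
    IsLocallyConstant g := by
  refine (IsLocallyConstant.iff_eventually_eq g).2 fun y => ?_
  have hU : IsOpen ((Iio M).pi fun n => {y n}) :=
    isOpen_set_pi (finite_Iio M) fun _ _ => isOpen_discrete _
  filter_upwards [hU.mem_nhds fun n _ => rfl] with z hz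
  exact hg z y hz

section Enumeration
variable {b : ℕ} (hb : 0 < b)

@[simp] theorem sEnum_length (k i : ℕ) : (sEnum b k hb i).length = k := List.length_ofFn

theorem sEnum_succ (k i : ℕ) :
    sEnum b (k + 1) hb i = ⟨i / b ^ k % b, Nat.mod_lt _ hb⟩ :: sEnum b k hb i := by
  simp only [sEnum, List.ofFn_succ, Fin.val_zero, Fin.val_succ]
  congr 3 with j
  simp only [Nat.add_sub_cancel]
  congr 3
  omega

theorem sEnum_mod_pow (k i : ℕ) : sEnum b k hb (i % b ^ k) = sEnum b k hb i := by
  simp only [sEnum, List.ofFn_inj]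
  funext j
  have hdvd : b ^ (k - 1 - j + 1) ∣ b ^ k := pow_dvd_pow b (by omega)
  ext
  simp only [← Nat.mod_mul_right_div_self, ← pow_succ, Nat.mod_mod_of_dvd _ hdvd]

theorem sEnum_lt_sEnum {k i j : ℕ} (hij : i < j) (hj : j < b ^ k) :
    sEnum b k hb i < sEnum b k hb j := by
  induction k generalizing i j with
  | zero => rw [pow_zero] at hj; omega
  | succ k ih =>
    have hpos : 0 < b ^ k := pow_pos hb k
    have hjb : j / b ^ k < b := Nat.div_lt_of_lt_mul (by rwa [← pow_succ])
    rw [sEnum_succ, sEnum_succ, List.cons_lt_cons_iff]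
    rcases (Nat.div_le_div_right (c := b ^ k) hij.le).lt_or_eq with hlt | heq
    · left
      rw [Fin.mk_lt_mk, Nat.mod_eq_of_lt hjb, Nat.mod_eq_of_lt (hlt.trans hjb)]
      exact hlt
    · refine Or.inr ⟨by rw [heq], ?_⟩
      rw [← sEnum_mod_pow hb k i, ← sEnum_mod_pow hb k j]
      refine ih ?_ (Nat.mod_lt _ hpos)
      have hi := Nat.div_add_mod i (b ^ k)
      have hj := Nat.div_add_mod j (b ^ k)
      rw [heq] at hi
      omega

theorem sEnum_injOn (k : ℕ) : InjOn (sEnum b k hb) (Iio (b ^ k)) := by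
  intro i hi j hj hij
  by_contra hne
  rcases lt_or_gt_of_ne hne with h | h
  · exact (sEnum_lt_sEnum hb h hj).ne hij
  · exact (sEnum_lt_sEnum hb h hi).ne' hij

theorem exists_mem_W_sEnum (k : ℕ) (z : ℕ → Fin b) : ∃ j < b ^ k, z ∈ W b (sEnum b k hb j) := by
  -- `finFunctionFinEquiv` lists the base-`b` digits least significant first, `sEnum` the other way.
  set j := finFunctionFinEquiv fun p : Fin k => z p.rev
  have hdigit (q : Fin k) : (j : ℕ) / b ^ (q : ℕ) % b = z q.rev := by
    rw [← finFunctionFinEquiv_symm_apply_val, Equiv.symm_apply_apply]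
  refine ⟨j, j.2, fun n hn => Fin.ext ?_⟩
  rw [sEnum_length] at hn
  have := hdigit (Fin.rev ⟨n, hn⟩)
  rw [Fin.rev_rev, Fin.val_rev] at this
  simp only [sEnum, List.get_ofFn, Fin.val_cast, Nat.sub_sub, add_comm 1 n]
  exact this.symm

end Enumeration

section Cell
variable {L : Type*} [LinearOrder L] [OrderTop L] {X : ℕ → L} {l : ℕ} (htop : X l = ⊤)

def cell (y : L) : ℕ := Nat.find (⟨l, htop ▸ le_top⟩ : ∃ c, y ≤ X c)

theorem le_cell (y : L) : y ≤ X (cell htop y) :=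
  Nat.find_spec (p := fun c => y ≤ X c) _

theorem cell_le {y : L} {c : ℕ} (h : y ≤ X c) : cell htop y ≤ c := Nat.find_min' _ h

theorem cell_le_top (y : L) : cell htop y ≤ l := cell_le htop (htop ▸ le_top)

theorem cell_le_cell {y z : L} (h : ∀ c, z ≤ X c → y ≤ X c) : cell htop y ≤ cell htop z :=
  cell_le htop (h _ (le_cell htop z))

theorem cell_mono : Monotone (cell htop) := fun _ _ hyz => cell_le_cell htop fun _ => hyz.trans

theorem cell_self {j : ℕ} (hj : ∀ c < j, X c < X j) : cell htop (X j) = j :=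
  (cell_le htop le_rfl).antisymm (not_lt.1 fun h => (hj _ h).not_ge (le_cell htop (X j)))

end Cell

section ExtendTop
variable {L : Type*} [Preorder L] [OrderTop L] {l : ℕ} (x : Fin l → L)

def extendTop (c : ℕ) : L := if h : c < l then x ⟨c, h⟩ else ⊤

theorem extendTop_of_lt {c : ℕ} (h : c < l) : extendTop x c = x ⟨c, h⟩ := dif_pos h

theorem extendTop_self : extendTop x l = ⊤ := dif_neg (lt_irrefl l)

theorem extendTop_lt_extendTop (hx : StrictMono x) (hlt : ∀ i, x i < ⊤) {c j : ℕ} (hcj : c < j)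
    (hj : j ≤ l) : extendTop x c < extendTop x j := by
  rw [extendTop_of_lt x (hcj.trans_le hj)]
  rcases hj.lt_or_eq with hj | rfl
  · exact extendTop_of_lt x hj ▸ hx (Fin.mk_lt_mk.2 hcj)
  · exact extendTop_self x ▸ hlt _

end ExtendTop

section CylinderMap
variable {b : ℕ} [NeZero b] (k N : ℕ) {X : ℕ → Lex (ℕ → Fin b)} {l : ℕ} (htop : X l = ⊤)

open Classical in
noncomputable def cylinderMap (y : ℕ → Fin b) : ℕ → Fin b :=
  prepend (sEnum b k (NeZero.pos b) (cell htop (toLex y)))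
    (if EqOn y (ofLex (X (cell htop (toLex y)))) (Iio N) then fun n => y (n + N) else ⊥)

theorem cylinderMap_mem_W_iff (hl : l < b ^ k) {j : ℕ} (hj : j < b ^ k) (y : ℕ → Fin b) :
    cylinderMap k N htop y ∈ W b (sEnum b k (NeZero.pos b) j) ↔ cell htop (toLex y) = j := by
  rw [cylinderMap, prepend_mem_W_iff (by simp)]
  exact (sEnum_injOn _ k).eq_iff ((cell_le_top htop _).trans_lt hl) hj

theorem cylinderMap_mono (hl : l < b ^ k) {y z : ℕ → Fin b} (h : toLex y ≤ toLex z) :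
    toLex (cylinderMap k N htop y) ≤ toLex (cylinderMap k N htop z) := by
  rcases (cell_mono htop h).lt_or_eq with hlt | heq
  · exact (prepend_lt_prepend (sEnum_lt_sEnum _ hlt ((cell_le_top htop _).trans_lt hl))
      (by simp) _ _).le
  by_cases hy : EqOn y (ofLex (X (cell htop (toLex y)))) (Iio N)
  · have hz : EqOn z (ofLex (X (cell htop (toLex y)))) (Iio N) :=
      eqOn_Iio_of_toLex_le_of_toLex_le h (heq ▸ le_cell htop (toLex z)) hy
    rw [cylinderMap, cylinderMap, if_pos hy, ← heq, if_pos hz]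
    exact prepend_le_prepend _ ((toLex_le_toLex_iff_tail (hy.trans hz.symm)).1 h)
  · rw [cylinderMap, cylinderMap, if_neg hy, ← heq]
    exact prepend_le_prepend _ bot_le

variable {k N}

theorem cell_eq_of_eqOn_Iio (hN : ∀ c n, N ≤ n → ofLex (X c) n = ⊤) {y z : ℕ → Fin b}
    (h : EqOn y z (Iio N)) : cell htop (toLex y) = cell htop (toLex z) :=
  (cell_le_cell htop fun c => toLex_le_of_eqOn_Iio (hN c) h.symm).antisymm
    (cell_le_cell htop fun c => toLex_le_of_eqOn_Iio (hN c) h)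

theorem continuous_cylinderMap (hN : ∀ c n, N ≤ n → ofLex (X c) n = ⊤) :
    Continuous (cylinderMap k N htop) := by
  refine continuous_pi fun n =>
    (isLocallyConstant_of_eqOn_Iio (N + n + 1) fun y z h => ?_).continuous
  have hyz : EqOn y z (Iio N) := h.mono (Iio_subset_Iio (by omega))
  rw [cylinderMap, cylinderMap, cell_eq_of_eqOn_Iio htop hN hyz]
  by_cases hz : EqOn z (ofLex (X (cell htop (toLex z)))) (Iio N)
  · rw [if_pos (hyz.trans hz), if_pos hz]
    simp only [prepend]
    split_ifs
    exacts [rfl, h (show n - _ + N < N + n + 1 by omega)]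
  · rw [if_neg (mt hyz.symm.trans hz), if_neg hz]

theorem surjective_cylinderMap (hX : ∀ j ≤ l, ∀ c < j, X c < X j)
    (hN : ∀ c n, N ≤ n → ofLex (X c) n = ⊤) (hl : b ^ k ≤ l + 1) :
    Function.Surjective (cylinderMap k N htop) := by
  intro z
  obtain ⟨j, hj, hz⟩ := exists_mem_W_sEnum (NeZero.pos b) k z
  set y := prepend (List.ofFn fun n : Fin N => ofLex (X j) n) (fun n => z (n + k))
  have hy : EqOn y (ofLex (X j)) (Iio N) := fun n hn => by
    simp [y, prepend_of_lt _ _ (show n < (List.ofFn _).length by simpa using hn)]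
  have hcell : cell htop (toLex y) = j :=
    (cell_eq_of_eqOn_Iio htop hN hy).trans (cell_self htop (hX j (by omega)))
  have htail : (fun n => y (n + N)) = fun n => z (n + (sEnum b k (NeZero.pos b) j).length) := by
    funext n
    simpa [y] using prepend_add_length (List.ofFn fun n : Fin N => ofLex (X j) n) _ n
  refine ⟨y, ?_⟩
  rw [cylinderMap, hcell, if_pos hy, htail, prepend_tail_of_mem_W hz]

theorem isGreatestLex_cylinderMap (hX : ∀ j ≤ l, ∀ c < j, X c < X j) (hl : l < b ^ k) {j : ℕ}
    (hj : j ≤ l) :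
    IsGreatestLex b (cylinderMap k N htop ⁻¹' W b (sEnum b k (NeZero.pos b) j)) (ofLex (X j)) := by
  have hjk : j < b ^ k := hj.trans_lt hl
  refine ⟨(cylinderMap_mem_W_iff k N htop hl hjk _).2 (cell_self htop (hX j hj)), fun y hy => ?_⟩
  rw [lexLE_iff_toLex_le, ← (cylinderMap_mem_W_iff k N htop hl hjk y).1 hy]
  exact le_cell htop _

end CylinderMap

section AbSet
variable {b : ℕ} [NeZero b] {x : ℕ → Fin b}

theorem eventually_eq_top_of_mem_AbSet (hx : x ∈ AbSet b) : ∀ᶠ n in Filter.atTop, x n = ⊤ := by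
  obtain ⟨⟨N, hN⟩, -⟩ := hx
  exact Filter.eventually_atTop.2 ⟨N, fun n hn => top_le_iff.1 (hN n hn ⊤)⟩

theorem toLex_lt_top_of_mem_AbSet (hx : x ∈ AbSet b) : toLex x < ⊤ :=
  lt_top_iff_ne_top.2 fun h => hx.2 fun n j => by rw [show x n = ⊤ from congrFun h n]; exact le_top

end AbSet

/-- every `≤_lex`-increasing `(b^k - 1)`-tuple in `A_b` is realized as the
tuple of maxima `(max f⁻¹(W_{s^k_i}))_{i < b^k - 1}` for some `f ∈ C↑_sur(b^ω)`. -/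
theorem finding_function (b : ℕ) (hb : 2 ≤ b) (k : ℕ)
    (x : Fin (b ^ k - 1) → (ℕ → Fin b))
    (hmem : ∀ i, x i ∈ AbSet b)
    (hmono : ∀ i j, i < j → lexLT b (x i) (x j)) :
    ∃ f, CSur b f ∧
      ∀ i : Fin (b ^ k - 1),
        IsGreatestLex b (f ⁻¹' W b (sEnum b k (by omega) (i : ℕ))) (x i) := by
  have : NeZero b := ⟨by omega⟩
  have hl : b ^ k - 1 < b ^ k := Nat.sub_one_lt (pow_pos (by omega) k).ne'
  obtain ⟨N, hN⟩ := Filter.eventually_atTop.1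
    (Filter.eventually_all.2 fun i => eventually_eq_top_of_mem_AbSet (hmem i))
  set X := extendTop fun i => toLex (x i)
  have htop : X (b ^ k - 1) = ⊤ := extendTop_self _
  have hX : ∀ j ≤ b ^ k - 1, ∀ c < j, X c < X j := fun j hj c hc =>
    extendTop_lt_extendTop _ (fun i j h => hmono i j h)
      (fun i => toLex_lt_top_of_mem_AbSet (hmem i)) hc hj
  have hXN : ∀ c n, N ≤ n → ofLex (X c) n = ⊤ := fun c n hn => by
    unfold X extendTop
    split_ifs
    exacts [hN n hn _, rfl]
  refine ⟨cylinderMap k N htop, ⟨continuous_cylinderMap htop hXN,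
    surjective_cylinderMap htop hX hXN (by omega), fun y z h =>
      lexLE_iff_toLex_le.2 (cylinderMap_mono k N htop hl (lexLE_iff_toLex_le.1 h))⟩, fun i => ?_⟩
  simpa only [X, extendTop_of_lt _ i.2, Fin.eta, ofLex_toLex] using
    isGreatestLex_cylinderMap htop hX hl i.2.le
end

section
/- There exists a coloring c : [ℚ]^η → ω of all subsets of ℚ order isomorphic to ℚ into countably many colors such that for every Y ∈ [ℚ]^η, the set [Y]^η of subsets of Y order isomorphic to ℚ witnesses all colors: for every n ∈ ω there is Z ⊆ Y order isomorphic to ℚ with c(Z) = n. -/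
/-!
Fix an enumeration `e : ℚ ≃ ℕ`. For `Z ⊆ ℚ` let `a` be the element of `Z` enumerated first and `b`
the element of `Z ∩ (a, ∞)` enumerated first; color `Z` by the number of elements of `Z` enumerated
strictly between `a` and `b` (they all lie below `a`).

Inside a copy `Y` of `ℚ`, pick any `a ∈ Y`, then `n` points of `Y` below `a` enumerated after `a`,
then `b ∈ Y` above `a` enumerated after all of them, and delete from `Y` every other point
enumerated before `b`. The resulting `Z` has color `n`, and it is again a copy of `ℚ`: by Cantor's
isomorphism theorem, removing finitely many points from a copy of `ℚ` leaves a copy of `ℚ`.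
-/

/-- `Y ⊆ ℚ` is order isomorphic to `ℚ`. -/
def QIsoQ (Y : Set ℚ) : Prop :=
  ∃ e : ℚ ≃ Y, ∀ p q : ℚ, p ≤ q ↔ (e p : ℚ) ≤ (e q : ℚ)

open Set

theorem nonempty_orderIso_of_finite_compl {α : Type*} [LinearOrder α] [Countable α]
    [DenselyOrdered α] [NoMinOrder α] [NoMaxOrder α] [Nonempty α] {S : Set α}
    (hS : Sᶜ.Finite) : Nonempty (α ≃o S) := by
  have mem_of_infinite : ∀ {I : Set α}, I.Infinite → ∃ x ∈ S, x ∈ I := fun hI => by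
    obtain ⟨x, hxI, hxS⟩ := (hI.sdiff hS).nonempty
    exact ⟨x, not_not.1 hxS, hxI⟩
  have : Nonempty S := by simpa using hS.infinite_compl.nonempty.to_subtype
  have : DenselyOrdered S := ⟨fun a b hab => by
    obtain ⟨x, hxS, hx⟩ := mem_of_infinite (Ioo_infinite (α := α) hab)
    exact ⟨⟨x, hxS⟩, hx⟩⟩
  have : NoMinOrder S := ⟨fun a => by
    obtain ⟨x, hxS, hx⟩ := mem_of_infinite (Iio_infinite (a : α))
    exact ⟨⟨x, hxS⟩, hx⟩⟩
  have : NoMaxOrder S := ⟨fun a => by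
    obtain ⟨x, hxS, hx⟩ := mem_of_infinite (Ioi_infinite (a : α))
    exact ⟨⟨x, hxS⟩, hx⟩⟩
  exact Order.iso_of_countable_dense α S

theorem qIsoQ_range (f : ℚ ↪o ℚ) : QIsoQ (range f) :=
  ⟨Equiv.ofInjective f f.injective, fun p q => by simp⟩

namespace QIsoQ

variable {Y Z : Set ℚ}

theorem exists_orderEmbedding (hY : QIsoQ Y) : ∃ f : ℚ ↪o ℚ, range f = Y := by
  obtain ⟨e, he⟩ := hY
  refine ⟨OrderEmbedding.ofMapLEIff (fun p => (e p : ℚ)) fun p q => (he p q).symm, ?_⟩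
  ext x
  exact ⟨by rintro ⟨p, rfl⟩; exact (e p).2, fun hx => ⟨e.symm ⟨x, hx⟩, by simp⟩⟩

theorem nonempty (hY : QIsoQ Y) : Y.Nonempty := by
  obtain ⟨f, rfl⟩ := hY.exists_orderEmbedding
  exact range_nonempty f

theorem infinite_inter_Iio (hY : QIsoQ Y) {a : ℚ} (ha : a ∈ Y) : (Y ∩ Iio a).Infinite := by
  obtain ⟨f, rfl⟩ := hY.exists_orderEmbedding
  obtain ⟨q, rfl⟩ := ha
  refine ((Iio_infinite q).image f.injective.injOn).mono ?_
  rintro _ ⟨p, hp, rfl⟩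
  exact ⟨mem_range_self p, f.lt_iff_lt.2 hp⟩

theorem infinite_inter_Ioi (hY : QIsoQ Y) {a : ℚ} (ha : a ∈ Y) : (Y ∩ Ioi a).Infinite := by
  obtain ⟨f, rfl⟩ := hY.exists_orderEmbedding
  obtain ⟨q, rfl⟩ := ha
  refine ((Ioi_infinite q).image f.injective.injOn).mono ?_
  rintro _ ⟨p, hp, rfl⟩
  exact ⟨mem_range_self p, f.lt_iff_lt.2 hp⟩

theorem of_subset_of_finite_diff (hY : QIsoQ Y) (hZY : Z ⊆ Y) (hfin : (Y \ Z).Finite) :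
    QIsoQ Z := by
  obtain ⟨f, rfl⟩ := hY.exists_orderEmbedding
  have hcompl : (f ⁻¹' Z)ᶜ.Finite :=
    (hfin.preimage f.injective.injOn).subset fun p hp => ⟨mem_range_self p, hp⟩
  obtain ⟨g⟩ := nonempty_orderIso_of_finite_compl hcompl
  have hZ : range ((f ∘ Subtype.val) ∘ g) = Z := by
    rw [g.surjective.range_comp, range_comp, Subtype.range_coe, image_preimage_eq_of_subset hZY]
  exact hZ ▸ qIsoQ_range (g.toOrderEmbedding.trans ((OrderEmbedding.subtype _).trans f))

end QIsoQ

section Enumeration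

variable {α : Type*} (e : α ≃ ℕ)

noncomputable def minIndex (S : Set α) : ℕ := sInf (e '' S)

noncomputable def enumColor [LinearOrder α] (Z : Set α) : ℕ :=
  let a := e.symm (minIndex e Z)
  (Z ∩ e ⁻¹' Ioo (minIndex e Z) (minIndex e {z ∈ Z | a < z})).ncard

theorem minIndex_eq {S : Set α} {a : α} (ha : a ∈ S) (h : ∀ z ∈ S, e a ≤ e z) :
    minIndex e S = e a :=
  le_antisymm (Nat.sInf_le ⟨a, ha, rfl⟩) (le_csInf ⟨_, a, ha, rfl⟩ (by
    rintro _ ⟨z, hz, rfl⟩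
    exact h z hz))

theorem enumColor_eq [LinearOrder α] {Z : Set α} {a b : α} (ha : a ∈ Z) (hb : b ∈ Z)
    (hab : a < b) (ha_min : ∀ z ∈ Z, e a ≤ e z) (hb_min : ∀ z ∈ Z, a < z → e b ≤ e z) :
    enumColor e Z = (Z ∩ e ⁻¹' Ioo (e a) (e b)).ncard := by
  have hb' : minIndex e {z ∈ Z | a < z} = e b :=
    minIndex_eq e ⟨hb, hab⟩ fun z hz => hb_min z hz.1 hz.2
  simp only [enumColor, minIndex_eq e ha ha_min, Equiv.symm_apply_apply, hb']

theorem Set.Infinite.infinite_inter_preimage_Ioi {s : Set α} (hs : s.Infinite) (N : ℕ) :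
    (s ∩ e ⁻¹' Ioi N).Infinite := by
  simpa [sdiff_eq, ← preimage_compl, compl_Iic] using
    hs.sdiff ((finite_Iic N).preimage e.injective.injOn)

theorem exists_finite_diff_enumColor_eq [LinearOrder α] {Y : Set α} {a : α} (ha : a ∈ Y)
    (hbelow : (Y ∩ Iio a).Infinite) (habove : (Y ∩ Ioi a).Infinite) (n : ℕ) :
    ∃ Z ⊆ Y, (Y \ Z).Finite ∧ enumColor e Z = n := by
  classical
  obtain ⟨B, hB, rfl⟩ := (hbelow.infinite_inter_preimage_Ioi e (e a)).exists_subset_card_eq n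
  have hB' : ∀ x ∈ B, x ∈ Y ∧ x < a ∧ e a < e x := fun x hx =>
    ⟨(hB hx).1.1, (hB hx).1.2, (hB hx).2⟩
  obtain ⟨_, ⟨b, ⟨hbY, hab⟩, rfl⟩, hb⟩ :=
    (habove.image e.injective.injOn).exists_gt (max (e a) (B.sup e))
  have hab_idx : e a < e b := (le_max_left _ _).trans_lt hb
  have hB_idx : ∀ x ∈ B, e x < e b := fun x hx =>
    ((Finset.le_sup hx).trans (le_max_right _ _)).trans_lt hb
  refine ⟨insert a (insert b ↑B) ∪ (Y ∩ e ⁻¹' Ioi (e b)), ?_, ?_, ?_⟩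
  · rintro z ((rfl | rfl | hz) | hz)
    exacts [ha, hbY, (hB' z hz).1, hz.1]
  · refine ((finite_Iic (e b)).preimage e.injective.injOn).subset ?_
    rintro z ⟨hzY, hz⟩
    exact show e z ≤ e b from le_of_not_gt fun h => hz (Or.inr ⟨hzY, h⟩)
  rw [enumColor_eq e (by simp) (by simp) hab, ← ncard_coe_finset]
  · congr 1
    ext z
    refine ⟨?_, fun hz => ⟨Or.inl (Or.inr (Or.inr hz)), (hB' z hz).2.2, hB_idx z hz⟩⟩
    rintro ⟨(rfl | rfl | hz) | hz, haz, hzb⟩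
    exacts [(lt_irrefl _ haz).elim, (lt_irrefl _ hzb).elim, hz, (hzb.asymm hz.2).elim]
  · rintro z ((rfl | rfl | hz) | hz)
    exacts [le_rfl, hab_idx.le, (hB' z hz).2.2.le, (hab_idx.trans hz.2).le]
  · rintro z ((rfl | rfl | hz) | hz) haz
    exacts [(lt_irrefl _ haz).elim, le_rfl, ((hB' z hz).2.1.asymm haz).elim, hz.2.le]

end Enumeration

/-- there is a coloring of `[ℚ]^η` into `ω` colors such that every
`Y ∈ [ℚ]^η` witnesses all colors on its subsets order isomorphic to `ℚ`. -/
theorem coloring_of_Q_copies :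
    ∃ c : Set ℚ → ℕ, ∀ Y : Set ℚ, QIsoQ Y →
      ∀ n : ℕ, ∃ Z ⊆ Y, QIsoQ Z ∧ c Z = n := by
  refine ⟨enumColor (Denumerable.eqv ℚ), fun Y hY n => ?_⟩
  obtain ⟨a, ha⟩ := hY.nonempty
  obtain ⟨Z, hZY, hfin, hZ⟩ := exists_finite_diff_enumColor_eq (Denumerable.eqv ℚ) ha
    (hY.infinite_inter_Iio ha) (hY.infinite_inter_Ioi ha) n
  exact ⟨Z, hZY, hY.of_subset_of_finite_diff hZY hfin, hZ⟩
end

section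
/- For every integer b ≥ 2 there exists a coloring c : C↑_sur(b^ω) → ω such that for every h ∈ C↑_sur(b^ω), the set {f∘h : f ∈ C↑_sur(b^ω)} witnesses all colors: for every n ∈ ω there exists f with c(f∘h) = n. -/
/-!
Fix a dense sequence `u` in `b^ω` and colour `g` by the position of the first nonzero digit of
`g (u k)`, where `k` is least with `g (u k) ∉ {⊥, ⊤}`. Every `f ∈ C↑_sur(b^ω)` fixes `⊥` and `⊤`,
so for `h ∈ C↑_sur(b^ω)` this `k` is the same for `f ∘ h` as for `h` as soon as `f` keeps
`p = h (u k)` off the endpoints. It therefore suffices to find, for every `p ∉ {⊥, ⊤}` and every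
`n`, some `f` with `f p = Pi.single n 1`. Cut `b^ω` into the clopen blocks of sequences with a
given prefix of length `K`, with `K` so large that the block `l + 1` of `p` is neither the first
nor the last one. Then `f` may send the blocks below `l` to `⊥`, block `l` onto
`[⊥, Pi.single n 1)` by prepending zeros, block `l + 1` to `Pi.single n 1`, block `l + 2` onto
`[Pi.single n 1, ⊤]` by `max`, and the blocks above `l + 2` to `⊤`.
-/

open Function Filter TopologicalSpace Classical

section LexShift

variable {α : Type*} [LinearOrder α] {x y : ℕ → α} {K : ℕ}

theorem toLex_lt_toLex_iff_of_eqOn (h : ∀ i < K, x i = y i) :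
    toLex x < toLex y ↔ toLex (fun i => x (K + i)) < toLex (fun i => y (K + i)) := by
  constructor
  · rintro ⟨j, hj, hlt⟩
    have hKj : K ≤ j := by
      by_contra! hjK
      exact hlt.ne (h j hjK)
    refine ⟨j - K, fun i hi => hj _ (by omega), ?_⟩
    simpa [Nat.add_sub_cancel' hKj] using hlt
  · rintro ⟨j, hj, hlt⟩
    refine ⟨K + j, fun i hi => ?_, hlt⟩
    rcases lt_or_ge i K with hiK | hiK
    · exact h i hiK
    · simpa [Nat.add_sub_cancel' hiK] using hj (i - K) (by omega)

theorem toLex_le_toLex_iff_of_eqOn (h : ∀ i < K, x i = y i) :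
    toLex x ≤ toLex y ↔ toLex (fun i => x (K + i)) ≤ toLex (fun i => y (K + i)) := by
  simp only [← not_lt]
  exact not_congr (toLex_lt_toLex_iff_of_eqOn fun i hi => (h i hi).symm)

end LexShift

theorem Monotone.map_bot_of_surjective {α β : Type*} [Preorder α] [OrderBot α] [PartialOrder β]
    [OrderBot β] {f : α → β} (hf : Monotone f) (hs : Surjective f) : f ⊥ = ⊥ := by
  obtain ⟨a, ha⟩ := hs ⊥
  exact le_bot_iff.1 (ha ▸ hf bot_le)

theorem Monotone.map_top_of_surjective {α β : Type*} [Preorder α] [OrderTop α] [PartialOrder β]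
    [OrderTop β] {f : α → β} (hf : Monotone f) (hs : Surjective f) : f ⊤ = ⊤ :=
  Monotone.map_bot_of_surjective (α := αᵒᵈ) (β := βᵒᵈ) hf.dual hs

theorem Fin.lt_one_iff_eq_zero {b : ℕ} [Fact (1 < b)] {a : Fin b} : a < 1 ↔ a = 0 := by
  rw [Fin.lt_def, Fin.val_one', Nat.mod_eq_of_lt Fact.out, Fin.ext_iff, Fin.val_zero]
  omega

namespace OscillationStability

variable {b : ℕ}

theorem lexLE_iff_toLex_le {x y : ℕ → Fin b} : lexLE b x y ↔ toLex x ≤ toLex y := by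
  rw [le_iff_eq_or_lt, toLex_inj]
  rfl

theorem cSur_iff {f : (ℕ → Fin b) → ℕ → Fin b} :
    CSur b f ↔ Continuous f ∧ Surjective f ∧ Monotone (toLex ∘ f ∘ ofLex) := by
  simp only [CSur, lexLE_iff_toLex_le]
  rfl

abbrev endpoints (b : ℕ) [NeZero b] : Set (ℕ → Fin b) := {⊥, ⊤}

section Endpoints

variable [NeZero b]

theorem CSur.mapsTo_bot_top {f : (ℕ → Fin b) → ℕ → Fin b} (hf : CSur b f) :
    Set.MapsTo f (endpoints b) (endpoints b) := by
  obtain ⟨-, hs, hm⟩ := cSur_iff.1 hf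
  have hs' : Surjective (toLex ∘ f ∘ ofLex) := toLex.surjective.comp (hs.comp ofLex.surjective)
  rintro x (rfl | rfl)
  · exact Or.inl (congrArg ofLex (hm.map_bot_of_surjective hs'))
  · exact Or.inr (congrArg ofLex (hm.map_top_of_surjective hs'))

noncomputable def firstNonzero (x : ℕ → Fin b) : ℕ :=
  if h : ∃ i, x i ≠ 0 then Nat.find h else 0

noncomputable def colour (g : (ℕ → Fin b) → ℕ → Fin b) : ℕ :=
  if h : ∃ k, g (denseSeq (ℕ → Fin b) k) ∉ endpoints b then
    firstNonzero (g (denseSeq (ℕ → Fin b) (Nat.find h)))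
  else 0

theorem colour_comp {f h : (ℕ → Fin b) → ℕ → Fin b}
    (hf : Set.MapsTo f (endpoints b) (endpoints b)) {k : ℕ}
    (hk : ∀ j < k, h (denseSeq (ℕ → Fin b) j) ∈ endpoints b)
    (hfk : f (h (denseSeq (ℕ → Fin b) k)) ∉ endpoints b) :
    colour (f ∘ h) = firstNonzero (f (h (denseSeq (ℕ → Fin b) k))) := by
  have H : ∃ k, (f ∘ h) (denseSeq (ℕ → Fin b) k) ∉ endpoints b := ⟨k, hfk⟩
  have hfind : Nat.find H = k :=
    (Nat.find_eq_iff H).2 ⟨hfk, fun j hj => not_not.2 (hf (hk j hj))⟩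
  rw [colour, dif_pos H, hfind]
  rfl

end Endpoints

def prefixValue (b : ℕ) : ℕ → (ℕ → Fin b) → ℕ
  | 0, _ => 0
  | K + 1, x => prefixValue b K x * b + x K

section PrefixValue

variable {x y : ℕ → Fin b} {K : ℕ}

theorem prefixValue_lt (K : ℕ) (x : ℕ → Fin b) : prefixValue b K x < b ^ K := by
  induction K with
  | zero => simp [prefixValue]
  | succ K ih =>
    have := (x K).isLt
    calc prefixValue b K x * b + x K < (prefixValue b K x + 1) * b := by rw [add_one_mul]; omega
      _ ≤ b ^ (K + 1) := by rw [pow_succ]; exact Nat.mul_le_mul_right b ih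

theorem prefixValue_congr (h : ∀ i < K, x i = y i) : prefixValue b K x = prefixValue b K y := by
  induction K with
  | zero => rfl
  | succ K ih => simp only [prefixValue, ih fun i hi => h i (by omega), h K K.lt_succ_self]

theorem prefixValue_lt_prefixValue {j : ℕ} (hjK : j < K) (h : ∀ i < j, x i = y i)
    (hj : x j < y j) : prefixValue b K x < prefixValue b K y := by
  induction K with
  | zero => omega
  | succ K ih =>
    simp only [prefixValue]
    rcases (Nat.lt_succ_iff_lt_or_eq.1 hjK) with hjK | rfl
    · have := (x K).isLt
      calc prefixValue b K x * b + x K < (prefixValue b K x + 1) * b := by rw [add_one_mul]; omega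
        _ ≤ prefixValue b K y * b + y K := (Nat.mul_le_mul_right b (ih hjK)).trans le_self_add
    · rw [prefixValue_congr h]
      exact Nat.add_lt_add_left hj _

theorem eventually_prefixValue_lt (h : toLex x < toLex y) :
    ∀ᶠ K in atTop, prefixValue b K x < prefixValue b K y := by
  obtain ⟨j, hj, hlt⟩ := h
  filter_upwards [eventually_gt_atTop j] with K hK using prefixValue_lt_prefixValue hK hj hlt

theorem prefixValue_mono (h : toLex x ≤ toLex y) : prefixValue b K x ≤ prefixValue b K y := by
  rcases h.lt_or_eq with ⟨j, hj, hlt⟩ | h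
  · rcases lt_or_ge j K with hjK | hjK
    · exact (prefixValue_lt_prefixValue hjK hj hlt).le
    · exact (prefixValue_congr fun i hi => hj i (by omega)).le
  · rw [toLex_inj.1 h]

theorem eqOn_of_prefixValue_eq (h : prefixValue b K x = prefixValue b K y) :
    ∀ i < K, x i = y i := by
  wlog hxy : toLex x ≤ toLex y generalizing x y
  · exact fun i hi => (this h.symm (le_of_not_ge hxy) i hi).symm
  rcases hxy.lt_or_eq with ⟨j, hj, hlt⟩ | hxy
  · have hKj : K ≤ j := by
      by_contra! hjK
      exact (prefixValue_lt_prefixValue hjK hj hlt).ne h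
    exact fun i hi => hj i (by omega)
  · rw [toLex_inj.1 hxy]
    exact fun _ _ => rfl

theorem exists_prefixValue_eq {M : ℕ} (hM : M < b ^ K) (t : ℕ → Fin b) :
    ∃ x, prefixValue b K x = M ∧ (fun i => x (K + i)) = t := by
  induction K generalizing M t with
  | zero => exact ⟨t, by simp_all [prefixValue], by simp⟩
  | succ K ih =>
    have hb : 0 < b := Nat.pos_of_ne_zero (by rintro rfl; simp at hM)
    obtain ⟨x, hx, hxt⟩ := ih (M := M / b) (Nat.div_lt_of_lt_mul (by rwa [← pow_succ']))
      fun i => if i = 0 then ⟨M % b, Nat.mod_lt M hb⟩ else t (i - 1)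
    refine ⟨x, ?_, funext fun i => by simpa [add_assoc, add_comm 1 i] using congrFun hxt (1 + i)⟩
    have hxK : x K = ⟨M % b, Nat.mod_lt M hb⟩ := by simpa using congrFun hxt 0
    simp only [prefixValue, hx, hxK, Nat.div_add_mod']

theorem continuous_prefixValue (K : ℕ) : Continuous (prefixValue b K) := by
  induction K with
  | zero => exact continuous_const
  | succ K ih =>
    exact (ih.mul continuous_const).add
      ((continuous_of_discreteTopology (f := Fin.val)).comp (continuous_apply K))

end PrefixValue

def blockMap (K : ℕ) (F : ℕ → (ℕ → Fin b) → ℕ → Fin b) (x : ℕ → Fin b) : ℕ → Fin b :=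
  F (prefixValue b K x) fun i => x (K + i)

section BlockMap

variable {K : ℕ} {F : ℕ → (ℕ → Fin b) → ℕ → Fin b}

theorem continuous_blockMap (hF : ∀ j, Continuous (F j)) : Continuous (blockMap K F) :=
  (continuous_prod_of_discrete_left (f := uncurry F).2 hF).comp <|
    (continuous_prefixValue K).prodMk (continuous_pi fun i => continuous_apply (K + i))

theorem surjective_blockMap (hF : ∀ z, ∃ j < b ^ K, ∃ t, F j t = z) :
    Surjective (blockMap K F) := by
  intro z
  obtain ⟨j, hj, t, rfl⟩ := hF z
  obtain ⟨x, hx, rfl⟩ := exists_prefixValue_eq hj t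
  exact ⟨x, by rw [blockMap, hx]⟩

theorem monotone_blockMap (hF : ∀ j, Monotone (toLex ∘ F j ∘ ofLex))
    (hF_succ : ∀ j s t, toLex (F j s) ≤ toLex (F (j + 1) t)) :
    Monotone (toLex ∘ blockMap K F ∘ ofLex) := by
  have hF_lt : ∀ i j, i < j → ∀ s t, toLex (F i s) ≤ toLex (F j t) := by
    intro i j hij s t
    induction j, hij using Nat.le_induction with
    | base => exact hF_succ i s t
    | succ j _ ih => exact ih.trans (hF_succ j t t)
  intro x y hxy
  obtain ⟨x, rfl⟩ := toLex.surjective x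
  obtain ⟨y, rfl⟩ := toLex.surjective y
  simp only [comp_apply, ofLex_toLex, blockMap]
  rcases (prefixValue_mono (K := K) hxy).lt_or_eq with hlt | heq
  · exact hF_lt _ _ hlt _ _
  · rw [heq]
    exact hF _ ((toLex_le_toLex_iff_of_eqOn (eqOn_of_prefixValue_eq heq)).1 hxy)

end BlockMap

section PrependZeros

variable [NeZero b]

def prependZeros (n : ℕ) (t : ℕ → Fin b) (i : ℕ) : Fin b :=
  if i ≤ n then 0 else t (i - (n + 1))

variable (n : ℕ)

theorem prependZeros_shift (t : ℕ → Fin b) : (fun i => prependZeros n t (n + 1 + i)) = t := by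
  funext i
  simp [prependZeros, show ¬n + 1 + i ≤ n by omega]

theorem monotone_prependZeros : Monotone (toLex ∘ prependZeros (b := b) n ∘ ofLex) := by
  intro s t hst
  show toLex (prependZeros n (ofLex s)) ≤ toLex (prependZeros n (ofLex t))
  refine (toLex_le_toLex_iff_of_eqOn (K := n + 1) fun i hi => ?_).2 ?_
  · simp [prependZeros, Nat.le_of_lt_succ hi]
  · simpa only [prependZeros_shift, toLex_ofLex] using hst

theorem continuous_prependZeros : Continuous (prependZeros (b := b) n) := by
  refine continuous_pi fun i => ?_
  by_cases hi : i ≤ n <;> simp [prependZeros, hi, continuous_apply, continuous_const]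

end PrependZeros

variable [Fact (1 < b)]

theorem toLex_lt_toLex_single_iff {n : ℕ} {z : ℕ → Fin b} :
    toLex z < toLex (Pi.single n 1) ↔ ∀ i ≤ n, z i = 0 := by
  constructor
  · rintro ⟨j, hj, hlt⟩
    obtain rfl : j = n := by
      by_contra hjn
      simp [hjn] at hlt
    intro i hi
    rcases hi.lt_or_eq with hi | rfl
    · simpa [Pi.single_apply, hi.ne] using hj i hi
    · simpa [Fin.lt_one_iff_eq_zero] using hlt
  · intro hz
    refine ⟨n, fun i hi => ?_, ?_⟩
    · simp [hi.ne, hz i hi.le]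
    · simp [hz n le_rfl, Fin.lt_one_iff_eq_zero]

theorem single_ne_bot (n : ℕ) : (Pi.single n 1 : ℕ → Fin b) ≠ ⊥ := by
  intro h
  simpa [bot_eq_zero, (Fact.out : 1 < b).ne'] using congrFun h n

theorem single_ne_top (n : ℕ) : (Pi.single n 1 : ℕ → Fin b) ≠ ⊤ := by
  intro h
  simpa [(Fact.out : 1 < b).ne'] using (congrFun h (n + 1)).symm

theorem firstNonzero_single (n : ℕ) : firstNonzero (Pi.single n 1 : ℕ → Fin b) = n := by
  have h : ∃ i, (Pi.single n 1 : ℕ → Fin b) i ≠ 0 := ⟨n, by simp [(Fact.out : 1 < b).ne']⟩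
  rw [firstNonzero, dif_pos h, Nat.find_eq_iff]
  exact ⟨by simp [(Fact.out : 1 < b).ne'], fun m hm => by simp [hm.ne]⟩

def maxSingle (n : ℕ) (t : ℕ → Fin b) : ℕ → Fin b :=
  if ∀ i ≤ n, t i = 0 then Pi.single n 1 else t

noncomputable def collapseBlocks (l n j : ℕ) : (ℕ → Fin b) → ℕ → Fin b :=
  if j < l then fun _ => ⊥
  else if j = l then prependZeros n
  else if j = l + 1 then fun _ => Pi.single n 1
  else if j = l + 2 then maxSingle n
  else fun _ => ⊤

section CollapseBlocks

variable (n : ℕ)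

theorem toLex_prependZeros_lt (t : ℕ → Fin b) :
    toLex (prependZeros n t) < toLex (Pi.single n 1) :=
  toLex_lt_toLex_single_iff.2 fun _ hi => if_pos hi

theorem toLex_maxSingle (t : ℕ → Fin b) :
    toLex (maxSingle n t) = max (toLex t) (toLex (Pi.single n 1)) := by
  by_cases ht : ∀ i ≤ n, t i = 0
  · rw [maxSingle, if_pos ht, max_eq_right (toLex_lt_toLex_single_iff.2 ht).le]
  · rw [maxSingle, if_neg ht, max_eq_left (not_lt.1 (mt toLex_lt_toLex_single_iff.1 ht))]

theorem continuous_maxSingle : Continuous (maxSingle (b := b) n) := by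
  have hclopen : IsClopen {t : ℕ → Fin b | ∀ i ≤ n, t i = 0} := by
    convert (Set.finite_Iic n).isClopen_biInter fun i _ =>
      (isClopen_discrete {(0 : Fin b)}).preimage (continuous_apply i)
    ext
    simp
  exact continuous_const.if (by simp [hclopen.frontier_eq]) continuous_id

variable (l : ℕ)

theorem continuous_collapseBlocks (j : ℕ) : Continuous (collapseBlocks (b := b) l n j) := by
  unfold collapseBlocks
  split_ifs
  exacts [continuous_const, continuous_prependZeros n, continuous_const, continuous_maxSingle n,
    continuous_const]

theorem monotone_collapseBlocks (j : ℕ) :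
    Monotone (toLex ∘ collapseBlocks (b := b) l n j ∘ ofLex) := by
  unfold collapseBlocks
  split_ifs
  exacts [monotone_const, monotone_prependZeros n, monotone_const,
    fun s t hst => by simpa [toLex_maxSingle] using max_le_max_right _ hst, monotone_const]

theorem collapseBlocks_le_succ (j : ℕ) (s t : ℕ → Fin b) :
    toLex (collapseBlocks l n j s) ≤ toLex (collapseBlocks l n (j + 1) t) := by
  unfold collapseBlocks
  split_ifs <;> first
    | omega
    | exact bot_le
    | exact le_top
    | exact le_rfl
    | exact (toLex_prependZeros_lt n s).le
    | exact (toLex_maxSingle n t).symm ▸ le_max_right _ _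

theorem collapseBlocks_self_add_one (t : ℕ → Fin b) :
    collapseBlocks l n (l + 1) t = Pi.single n 1 := by
  simp [collapseBlocks]

theorem exists_collapseBlocks_eq (z : ℕ → Fin b) :
    ∃ j ≤ l + 2, ∃ t, collapseBlocks l n j t = z := by
  rcases lt_trichotomy (toLex z) (toLex (Pi.single n 1)) with hz | hz | hz
  · refine ⟨l, by omega, fun i => z (n + 1 + i), ?_⟩
    have hzero := toLex_lt_toLex_single_iff.1 hz
    funext i
    by_cases hi : i ≤ n
    · simp [collapseBlocks, prependZeros, hi, hzero i hi]
    · simp [collapseBlocks, prependZeros, hi, show n + 1 + (i - (n + 1)) = i by omega]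
  · exact ⟨l + 1, by omega, z, by rw [collapseBlocks_self_add_one, toLex_inj.1 hz]⟩
  · refine ⟨l + 2, le_rfl, z, toLex_inj.1 ?_⟩
    simp [collapseBlocks, toLex_maxSingle, hz.le]

end CollapseBlocks

theorem exists_cSur_apply_eq_single {p : ℕ → Fin b} (hp : p ∉ endpoints b) (n : ℕ) :
    ∃ f, CSur b f ∧ f p = Pi.single n 1 := by
  simp only [Set.mem_insert_iff, Set.mem_singleton_iff, not_or] at hp
  have hbot : toLex ⊥ < toLex p := bot_lt_iff_ne_bot.2 (toLex_inj.not.2 hp.1)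
  have htop : toLex p < toLex ⊤ := lt_top_iff_ne_top.2 (toLex_inj.not.2 hp.2)
  obtain ⟨K, hK_bot, hK_top⟩ :=
    ((eventually_prefixValue_lt hbot).and (eventually_prefixValue_lt htop)).exists
  have hK := prefixValue_lt K (⊤ : ℕ → Fin b)
  set l := prefixValue b K p - 1
  have hl : prefixValue b K p = l + 1 := by omega
  refine ⟨blockMap K (collapseBlocks l n), cSur_iff.2 ⟨?_, ?_, ?_⟩, ?_⟩
  · exact continuous_blockMap (continuous_collapseBlocks n l)
  · refine surjective_blockMap fun z => ?_
    obtain ⟨j, hj, t, ht⟩ := exists_collapseBlocks_eq n l z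
    exact ⟨j, by omega, t, ht⟩
  · exact monotone_blockMap (monotone_collapseBlocks n l) (collapseBlocks_le_succ n l)
  · rw [blockMap, hl, collapseBlocks_self_add_one]

theorem exists_denseSeq_apply_notMem {h : (ℕ → Fin b) → ℕ → Fin b} (hh : CSur b h) :
    ∃ k, h (denseSeq (ℕ → Fin b) k) ∉ endpoints b := by
  obtain ⟨x, hx⟩ := hh.2.1 (Pi.single 0 1)
  have hopen : IsOpen (h ⁻¹' (endpoints b)ᶜ) :=
    (Set.toFinite _).isClosed.isOpen_compl.preimage hh.1
  exact (denseRange_denseSeq _).exists_mem_open hopen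
    ⟨x, by simp [hx, single_ne_bot, single_ne_top]⟩

end OscillationStability

open OscillationStability in
/-- exact oscillation stability fails: there is a coloring of
`C↑_sur(b^ω)` into `ω` colors such that `{f ∘ h : f ∈ C↑_sur(b^ω)}` witnesses all
colors for every `h ∈ C↑_sur(b^ω)`. -/
theorem exact_oscillation_fails (b : ℕ) (hb : 2 ≤ b) :
    ∃ c : ((ℕ → Fin b) → (ℕ → Fin b)) → ℕ,
      ∀ h, CSur b h → ∀ n : ℕ, ∃ f, CSur b f ∧ c (f ∘ h) = n := by
  have : Fact (1 < b) := ⟨hb⟩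
  refine ⟨colour, fun h hh n => ?_⟩
  have H := exists_denseSeq_apply_notMem hh
  obtain ⟨k, hk, hk_min⟩ : ∃ k, h (denseSeq (ℕ → Fin b) k) ∉ endpoints b ∧
      ∀ j < k, h (denseSeq (ℕ → Fin b) j) ∈ endpoints b :=
    ⟨Nat.find H, Nat.find_spec H, fun j hj => not_not.1 (Nat.find_min H hj)⟩
  obtain ⟨f, hf, hfk⟩ := exists_cSur_apply_eq_single hk n
  have hfk_mem : f (h (denseSeq (ℕ → Fin b) k)) ∉ endpoints b := by
    simp [hfk, single_ne_bot, single_ne_top]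
  exact ⟨f, hf, by rw [colour_comp hf.mapsTo_bot_top hk_min hfk_mem, hfk, firstNonzero_single]⟩
end
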